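/- arXiv:1306.6341 — 2 statements merged into one kernel-verified Lean document; each statement's English description precedes it below -/
import Mathlib

section
/- Charge-conservation independence of reference spinor: if Q₁,…,Q_N are numbers with ∑ᵢ Qᵢ = 0, then for any spinors q, r, t (with the relevant brackets nonzero), ∑ᵢ Qᵢ [r pᵢ]/([q r][q pᵢ]) = ∑ᵢ Qᵢ [t pᵢ]/([q t][q pᵢ]); i.e., the eikonal sum is independent of the reference spinor r. -/
/-
Changing the reference spinor from r to t shifts every leg's eikonal factor by the same amount.
By the Schouten identity [r p][q t] - [t p][q r] = [r t][q p], so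
[r p]/([q r][q p]) - [t p]/([q t][q p]) = [r t]/([q r][q t]), which does not depend on p.
The total change is therefore (∑ᵢ Qᵢ) [r t]/([q r][q t]), which vanishes by charge conservation.
-/

noncomputable section
open BigOperators

/-- The antisymmetric spinor bracket [ab] = a₁b₂ − a₂b₁ on ℂ². -/
def sbr (a b : Fin 2 → ℂ) : ℂ := a 0 * b 1 - a 1 * b 0

theorem sbr_schouten (q r t p : Fin 2 → ℂ) :
    sbr r p * sbr q t - sbr t p * sbr q r = sbr r t * sbr q p := by
  simp only [sbr]
  ring

theorem sbr_div_sub_sbr_div {q r t p : Fin 2 → ℂ} (hqr : sbr q r ≠ 0) (hqt : sbr q t ≠ 0)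
    (hqp : sbr q p ≠ 0) :
    sbr r p / (sbr q r * sbr q p) - sbr t p / (sbr q t * sbr q p) =
      sbr r t / (sbr q r * sbr q t) := by
  rw [div_sub_div _ _ (mul_ne_zero hqr hqp) (mul_ne_zero hqt hqp),
    div_eq_div_iff (mul_ne_zero (mul_ne_zero hqr hqp) (mul_ne_zero hqt hqp)) (mul_ne_zero hqr hqt)]
  linear_combination (sbr q r * sbr q t * sbr q p) * sbr_schouten q r t p

/-- Charge-conservation independence of the reference spinor in the eikonal sum:
if ∑ᵢ Qᵢ = 0 then ∑ᵢ Qᵢ [r pᵢ]/([q r][q pᵢ]) = ∑ᵢ Qᵢ [t pᵢ]/([q t][q pᵢ]). -/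
theorem stmt_2 (N : ℕ) (Q : Fin N → ℂ) (p : Fin N → (Fin 2 → ℂ)) (q r t : Fin 2 → ℂ)
    (hQ : ∑ i, Q i = 0)
    (hqr : sbr q r ≠ 0) (hqt : sbr q t ≠ 0) (hqp : ∀ i, sbr q (p i) ≠ 0) :
    ∑ i, Q i * sbr r (p i) / (sbr q r * sbr q (p i)) =
      ∑ i, Q i * sbr t (p i) / (sbr q t * sbr q (p i)) := by
  have shift : ∀ i, Q i * sbr r (p i) / (sbr q r * sbr q (p i)) -
      Q i * sbr t (p i) / (sbr q t * sbr q (p i)) = Q i * (sbr r t / (sbr q r * sbr q t)) := by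
    intro i
    rw [mul_div_assoc, mul_div_assoc, ← mul_sub, sbr_div_sub_sbr_div hqr hqt (hqp i)]
  rw [← sub_eq_zero, ← Finset.sum_sub_distrib, Finset.sum_congr rfl fun i _ => shift i,
    ← Finset.sum_mul, hQ, zero_mul]
end
end

section
/- Eikonal identity: for a four-vector n and four-vectors k₁,…,k_ℓ with all relevant denominators nonzero, the sum over all permutations σ of {1,…,ℓ} of ∏_{i=1}^{ℓ} (n·ε_{σ(i)}) / (n·(k_{σ(1)}+⋯+k_{σ(i)})) equals ∏_{i=1}^{ℓ} (n·ε_i)/(n·k_i). -/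
/-!
Condition on the last element `p = σ(ℓ)` of the ordering. Its denominator is the full sum
`S = ∑ b`, and the remaining factors form the same sum for the other `ℓ - 1` indices, so by
induction the left side is `∑ₚ (aₚ / S) ∏_{q ≠ p} a_q / b_q = ∑ₚ (bₚ / S) ∏_q a_q / b_q`,
which is `∏_q a_q / b_q`.
-/

open Finset

lemma Fin.Iic_last {n : ℕ} : Iic (Fin.last n) = univ := Iic_top

section Orderings

variable {ι : Type*} {n : ℕ} {K : Type*} [Semifield K]

lemma prod_div_sum_Iic_succ (a b : ι → K) (e : Fin (n + 1) ≃ ι) :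
    ∏ i, a (e i) / ∑ j ∈ Iic i, b (e j) =
      (∏ i : Fin n, a (e i.castSucc) / ∑ j ∈ Iic i, b (e j.castSucc)) *
        (a (e (Fin.last n)) / ∑ j, b (e j)) := by
  simp only [Fin.prod_univ_castSucc, Fin.sum_Iic_castSucc, Fin.Iic_last]

variable [DecidableEq ι]

def Equiv.finSnoc (p : ι) (f : Fin n ≃ {y // y ≠ p}) : Fin (n + 1) ≃ ι :=
  finSuccEquivLast.trans ((Equiv.optionSubtype p).symm f)

@[simp] lemma Equiv.finSnoc_castSucc (p : ι) (f : Fin n ≃ {y // y ≠ p}) (i : Fin n) :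
    Equiv.finSnoc p f i.castSucc = f i := by
  simp [Equiv.finSnoc]

@[simp] lemma Equiv.finSnoc_last (p : ι) (f : Fin n ≃ {y // y ≠ p}) :
    Equiv.finSnoc p f (Fin.last n) = p := by
  simp [Equiv.finSnoc]

lemma Fintype.sum_equiv_fin_succ [Fintype ι] {M : Type*} [AddCommMonoid M]
    (F : (Fin (n + 1) ≃ ι) → M) :
    ∑ e, F e = ∑ p, ∑ f : Fin n ≃ {y // y ≠ p}, F (Equiv.finSnoc p f) := by
  rw [← Equiv.sum_comp (finSuccEquivLast.equivCongr (Equiv.refl ι)).symm,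
    ← Fintype.sum_fiberwise (fun e : Option (Fin n) ≃ ι => e none)]
  refine Fintype.sum_congr _ _ fun p => ?_
  rw [← Equiv.sum_comp (Equiv.optionSubtype p).symm]
  rfl

lemma mul_prod_subtype_ne_div [Fintype ι] (a b : ι → K) {p : ι} (hp : b p ≠ 0) :
    a p * ∏ y : {y // y ≠ p}, a y / b y = b p * ∏ x, a x / b x := by
  rw [Fintype.prod_eq_mul_prod_subtype_ne _ p, ← mul_assoc, mul_div_cancel₀ _ hp]

theorem sum_equiv_prod_div_sum_Iic [Fintype ι] (a b : ι → K) (hcard : Fintype.card ι = n)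
    (hb : ∀ (e : Fin n ≃ ι) (i : Fin n), ∑ j ∈ Iic i, b (e j) ≠ 0) :
    ∑ e : Fin n ≃ ι, ∏ i, a (e i) / ∑ j ∈ Iic i, b (e j) = ∏ x, a x / b x := by
  induction n generalizing ι with
  | zero =>
    have : IsEmpty ι := Fintype.card_eq_zero_iff.mp hcard
    simp [Fintype.card_equiv (Fintype.equivFinOfCardEq hcard).symm]
  | succ n ih =>
    obtain e₀ : Fin (n + 1) ≃ ι := (Fintype.equivFinOfCardEq hcard).symm
    have hS : ∑ x, b x ≠ 0 := by
      simpa [Fin.Iic_last, Equiv.sum_comp] using hb e₀ (Fin.last n)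
    have hbp (p : ι) : b p ≠ 0 := by
      simpa [← bot_eq_zero, Iic_bot] using hb (e₀.trans (Equiv.swap (e₀ 0) p)) 0
    have hfiber (p : ι) :
        ∑ f : Fin n ≃ {y // y ≠ p}, ∏ i, a (Equiv.finSnoc p f i) /
            ∑ j ∈ Iic i, b (Equiv.finSnoc p f j) =
          a p / (∑ x, b x) * ∏ y : {y // y ≠ p}, a y / b y := by
      have hrest := ih (ι := {y // y ≠ p}) (fun y => a y) (fun y => b y)
        (by simp [Fintype.card_subtype_compl, hcard]) fun f i => by
          simpa [Fin.sum_Iic_castSucc] using hb (Equiv.finSnoc p f) i.castSucc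
      rw [← hrest, mul_sum]
      refine Fintype.sum_congr _ _ fun f => ?_
      rw [prod_div_sum_Iic_succ, Equiv.sum_comp, mul_comm]
      simp only [Equiv.finSnoc_castSucc, Equiv.finSnoc_last]
    calc ∑ e : Fin (n + 1) ≃ ι, ∏ i, a (e i) / ∑ j ∈ Iic i, b (e j)
        = ∑ p, a p / (∑ x, b x) * ∏ y : {y // y ≠ p}, a y / b y := by
          rw [Fintype.sum_equiv_fin_succ]
          exact Fintype.sum_congr _ _ hfiber
      _ = ∑ p, b p / (∑ x, b x) * ∏ x, a x / b x := by
          simp only [div_mul_eq_mul_div, mul_prod_subtype_ne_div a b (hbp _)]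
      _ = ∏ x, a x / b x := by
          rw [← sum_mul, ← sum_div, div_self hS, one_mul]

end Orderings

/-- Eikonal identity:
∑_{σ ∈ S_ℓ} ∏_{i=1}^{ℓ} a_{σ(i)} / (b_{σ(1)}+⋯+b_{σ(i)}) = ∏_{i=1}^{ℓ} a_i/b_i,
assuming all the partial sums b_{σ(1)}+⋯+b_{σ(i)} are nonzero. -/
theorem stmt_3 (ℓ : ℕ) (a b : Fin ℓ → ℂ)
    (hb : ∀ (σ : Equiv.Perm (Fin ℓ)) (i : Fin ℓ), (∑ j ∈ Finset.Iic i, b (σ j)) ≠ 0) :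
    ∑ σ : Equiv.Perm (Fin ℓ), ∏ i, a (σ i) / (∑ j ∈ Finset.Iic i, b (σ j)) =
      ∏ i, a i / b i :=
  sum_equiv_prod_div_sum_Iic a b (Fintype.card_fin ℓ) hb
end
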